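/- Let S be a Noetherian regular local ring of characteristic p which is F-finite, A = S⟦π⟧, and K = A_π the localization of A away from π. Let m ≥ 1 and n ≥ 0 be integers, let s be the least j with 0 ≤ j ≤ m−1 such that p^(m−1−j) divides n, and set i = n / p^(m−1−s). Then for every b ∈ 𝕎 S, the Witt vector V^s(teichmuller(π^i)·ι(b)) ∈ 𝕎 K satisfies fil(π^{−n}, m), where ι : 𝕎 S → 𝕎 K is induced by the canonical ring homomorphism S → K and V^s is the s-fold Verschiebung. (This is the inclusion F^{m,0}_n(S) ⊆ fil_{−n} W_m(K).) -/
import Mathlib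


/-- The Brylinski–Kato filtration condition on (truncated) Witt vectors, in Witt
coordinates: `a ∈ 𝕎 K` satisfies `fil(x, m)` if for every `j < m` the element
`x * (a.coeff j) ^ (p ^ (m - 1 - j))` lies in the image of `A` in `K`. -/
def WittFil (p : ℕ) [Fact p.Prime] (A : Type*) {K : Type*} [CommRing A] [CommRing K]
    [Algebra A K] (x : K) (m : ℕ) (a : WittVector p K) : Prop :=
  ∀ j < m, x * a.coeff j ^ p ^ (m - 1 - j) ∈ Set.range (algebraMap A K)


open WittVector Finset

variable {p : ℕ} [hp : Fact p.Prime]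

private lemma wv_map_mk {R S : Type*} [CommRing R] [CommRing S] (f : R →+* S) (g : ℕ → R) :
    WittVector.map f (WittVector.mk p g) = WittVector.mk p (fun k => f (g k)) := by
  ext k
  simp [WittVector.map_coeff, WittVector.coeff_mk]

private lemma teichmuller_mul_eq_mk_of_invertible {R : Type*} [CommRing R] [Invertible (p : R)]
    (r : R) (x : WittVector p R) :
    teichmuller p r * x = WittVector.mk p (fun k => r ^ p ^ k * x.coeff k) := by
  apply (ghostMap.bijective_of_invertible p R).1
  funext m
  have : (ghostMap (teichmuller p r * x)) m
      = ghostComponent m (teichmuller p r) * ghostComponent m x := by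
    rw [map_mul]; rfl
  rw [this, ghostComponent_teichmuller, ghostComponent_apply, aeval_wittPolynomial,
    ghostMap_apply, ghostComponent_apply, aeval_wittPolynomial]
  rw [Finset.mul_sum]
  refine Finset.sum_congr rfl fun i hi => ?_
  have hi' : i ≤ m := by simpa using Nat.lt_succ_iff.mp (Finset.mem_range.mp hi)
  rw [WittVector.coeff_mk, mul_pow, ← pow_mul, ← pow_add, Nat.add_sub_cancel' hi']
  ring

private lemma teichmuller_mul_eq_mk {R : Type*} [CommRing R] (r : R) (x : WittVector p R) :
    teichmuller p r * x = WittVector.mk p (fun k => r ^ p ^ k * x.coeff k) := by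
  -- generic case
  set R₀ := MvPolynomial (Option ℕ) ℤ
  have key : teichmuller p (MvPolynomial.X (R := ℤ) (none : Option ℕ))
        * WittVector.mk p (fun k => MvPolynomial.X (some k))
      = WittVector.mk p (fun k =>
          MvPolynomial.X (R := ℤ) (none : Option ℕ) ^ p ^ k * MvPolynomial.X (some k)) := by
    apply WittVector.map_injective (MvPolynomial.map (Int.castRingHom ℚ))
      (MvPolynomial.map_injective _ Int.cast_injective)
    rw [map_mul, map_teichmuller, wv_map_mk, wv_map_mk,
      teichmuller_mul_eq_mk_of_invertible]
    simp [WittVector.coeff_mk]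
  let f : R₀ →+* R :=
    (MvPolynomial.aeval (fun o : Option ℕ => o.elim r x.coeff)).toRingHom
  have := congrArg (WittVector.map f) key
  rw [map_mul, map_teichmuller, wv_map_mk, wv_map_mk] at this
  have hf0 : f (MvPolynomial.X none) = r := by
    show (MvPolynomial.aeval fun o : Option ℕ => o.elim r x.coeff) (MvPolynomial.X none) = r
    rw [MvPolynomial.aeval_X]; rfl
  have hfs : ∀ k, f (MvPolynomial.X (some k)) = x.coeff k := fun k => by
    show (MvPolynomial.aeval fun o : Option ℕ => o.elim r x.coeff) (MvPolynomial.X (some k)) = x.coeff k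
    rw [MvPolynomial.aeval_X]; rfl
  rw [hf0] at this
  have hx : WittVector.mk p (fun k => f (MvPolynomial.X (some k))) = x := by
    ext k; simp [WittVector.coeff_mk, hfs]
  rw [hx] at this
  rw [this]
  congr 1
  funext k
  simp [map_mul, map_pow, hf0, hfs]

lemma teichmuller_mul_coeff {R : Type*} [CommRing R] (r : R) (x : WittVector p R) (k : ℕ) :
    (teichmuller p r * x).coeff k = r ^ p ^ k * x.coeff k := by
  rw [teichmuller_mul_eq_mk]
  exact congrFun (WittVector.coeff_mk p _) k

lemma iterate_verschiebung_coeff_lt {R : Type*} [CommRing R] (x : WittVector p R)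
    (s j : ℕ) (h : j < s) : ((verschiebung (p := p))^[s] x).coeff j = 0 := by
  induction s generalizing j with
  | zero => omega
  | succ s ih =>
    rw [Function.iterate_succ_apply']
    cases j with
    | zero => exact verschiebung_coeff_zero _
    | succ j => rw [verschiebung_coeff_succ]; exact ih j (by omega)

/-- Let `S` be an `F`-finite Noetherian regular local ring of
characteristic `p`, `A = S⟦π⟧`, `K = A_π` (with `π` a unit `u` of `K`).  Let `m ≥ 1`,
`n ≥ 0`, let `s` be the least `j ≤ m-1` such that `p^(m-1-j) ∣ n` and set
`i = n / p^(m-1-s)`.  Then for every `b ∈ 𝕎 S` the Witt vector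
`V^s(teichmuller(π^i)·ι(b))` satisfies `fil(π^{-n}, m)`, where `ι : 𝕎 S → 𝕎 K` is
induced by `S → K`.  (This is `F^{m,0}_n(S) ⊆ fil_{-n} W_m(K)`.) -/
theorem wittFil_F_group_subset
    (p : ℕ) [Fact p.Prime]
    (S : Type*) [CommRing S] [IsNoetherianRing S] [IsLocalRing S] [CharP S p]
    (hreg : ∃ (d : ℕ) (v : Fin d → S),
      Ideal.span (Set.range v) = IsLocalRing.maximalIdeal S ∧ ringKrullDim S = d)
    (hF : (frobenius S p).Finite)
    (K : Type*) [CommRing K] [Algebra (PowerSeries S) K]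
    [IsLocalization.Away (PowerSeries.X : PowerSeries S) K]
    [Algebra S K] [IsScalarTower S (PowerSeries S) K]
    (u : Kˣ) (hu : (u : K) = algebraMap (PowerSeries S) K PowerSeries.X)
    (m : ℕ) (hm : 1 ≤ m) (n : ℕ)
    (s : ℕ) (hs : s ≤ m - 1) (hsdvd : p ^ (m - 1 - s) ∣ n)
    (hsmin : ∀ j < s, ¬ p ^ (m - 1 - j) ∣ n)
    (b : WittVector p S) :
    WittFil p (PowerSeries S) ((u ^ (-(n : ℤ)) : Kˣ) : K) m
      ((fun a : WittVector p K => WittVector.verschiebung a)^[s]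
        (WittVector.teichmuller p ((u : K) ^ (n / p ^ (m - 1 - s))) *
          WittVector.map (algebraMap S K) b)) := by
  have heta : (fun a : WittVector p K => WittVector.verschiebung a)
      = (WittVector.verschiebung : WittVector p K → WittVector p K) := rfl
  rw [heta]
  intro j hj
  by_cases hjs : j < s
  · rw [iterate_verschiebung_coeff_lt _ _ _ hjs,
      zero_pow (pow_ne_zero _ (Nat.Prime.ne_zero Fact.out)), mul_zero]
    exact ⟨0, map_zero _⟩
  · push_neg at hjs
    set i := n / p ^ (m - 1 - s) with hidef
    have hi : i * p ^ (m - 1 - s) = n := Nat.div_mul_cancel hsdvd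
    have hcoeff : ((WittVector.verschiebung (p := p) (R := K))^[s]
        (WittVector.teichmuller p ((u : K) ^ i) *
          WittVector.map (algebraMap S K) b)).coeff j
        = ((u : K) ^ i) ^ p ^ (j - s) * algebraMap S K (b.coeff (j - s)) := by
      have hj' : j = (j - s) + s := by omega
      rw [hj', WittVector.iterate_verschiebung_coeff, teichmuller_mul_coeff,
        WittVector.map_coeff, Nat.add_sub_cancel]
    rw [hcoeff, mul_pow, ← pow_mul, ← pow_mul]
    have hexp : i * (p ^ (j - s) * p ^ (m - 1 - j)) = n := by
      rw [← pow_add]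
      have h1 : (j - s) + (m - 1 - j) = m - 1 - s := by omega
      rw [h1, hi]
    rw [hexp, ← mul_assoc]
    have hone : ((u ^ (-(n : ℤ)) : Kˣ) : K) * (u : K) ^ n = 1 := by
      have h2 : ((u : K) ^ n) = ((u ^ (n : ℤ) : Kˣ) : K) := by
        rw [zpow_natCast, Units.val_pow_eq_pow_val]
      rw [h2, ← Units.val_mul, ← zpow_add, neg_add_cancel, zpow_zero, Units.val_one]
    rw [hone, one_mul, ← map_pow]
    exact ⟨algebraMap S (PowerSeries S) (b.coeff (j - s) ^ p ^ (m - 1 - j)),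
      (IsScalarTower.algebraMap_apply S (PowerSeries S) K _).symm⟩
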